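/- Fix z ∈ ℝ and work on U = {(u,v) ∈ ℝ² : u ≠ v} with the Poisson bracket {f,g} = (u−v)²·(∂f/∂u ∂g/∂v − ∂f/∂v ∂g/∂u) (the bracket of the symplectic form ω = du∧dv/(u−v)²). The smooth functions h_{z,1} = 1/(u−v), h_{z,2} = (1/2)·sinhc(2z/(u−v))·(u+v)/(u−v), h_{z,3} = ( sinhc²(2z/(u−v))·(u+v)² − (u−v)² ) / ( 4·(u−v)·sinhc(2z/(u−v)) ) satisfy {h_{z,1},h_{z,2}} = −sinhc(2z h_{z,1})·h_{z,1}, {h_{z,1},h_{z,3}} = −2 h_{z,2}, and {h_{z,2},h_{z,3}} = −cosh(2z h_{z,1})·h_{z,3}. -/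

import Mathlib

/-- The cardinal hyperbolic sine: `sinhc t = sinh t / t` for `t ≠ 0`, `sinhc 0 = 1`. -/
noncomputable def sinhc (t : ℝ) : ℝ := if t = 0 then 1 else Real.sinh t / t

/-- Canonical Poisson bracket on the plane (coordinates `(u,v)`):
`∂f/∂u ∂g/∂v − ∂f/∂v ∂g/∂u`. -/
noncomputable def pb (f g : ℝ × ℝ → ℝ) (p : ℝ × ℝ) : ℝ :=
  fderiv ℝ f p (1, 0) * fderiv ℝ g p (0, 1) - fderiv ℝ f p (0, 1) * fderiv ℝ g p (1, 0)

/-- Deformed coupled-Riccati Hamiltonian `h_{z,1} = 1/(u−v)`. -/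
noncomputable def h2R1 : ℝ × ℝ → ℝ := fun q => 1 / (q.1 - q.2)

/-- Deformed coupled-Riccati Hamiltonian `h_{z,2} = (1/2) sinhc(2z/(u−v)) (u+v)/(u−v)`. -/
noncomputable def h2R2 (z : ℝ) : ℝ × ℝ → ℝ := fun q =>
  (1 / 2) * sinhc (2 * z / (q.1 - q.2)) * ((q.1 + q.2) / (q.1 - q.2))

/-- Deformed coupled-Riccati Hamiltonian
`h_{z,3} = (sinhc²(2z/(u−v))(u+v)² − (u−v)²)/(4(u−v) sinhc(2z/(u−v)))`. -/
noncomputable def h2R3 (z : ℝ) : ℝ × ℝ → ℝ := fun q =>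
  ((sinhc (2 * z / (q.1 - q.2))) ^ 2 * (q.1 + q.2) ^ 2 - (q.1 - q.2) ^ 2)
    / (4 * (q.1 - q.2) * sinhc (2 * z / (q.1 - q.2)))

set_option maxHeartbeats 1000000 in
/-- On `{u ≠ v}` with the Poisson bracket
`{f,g} = (u−v)²(∂f/∂u ∂g/∂v − ∂f/∂v ∂g/∂u)` of `ω = du∧dv/(u−v)²`, the deformed
coupled-Riccati Hamiltonians close the deformed sl(2) brackets. -/
theorem deformed_coupledRiccati_brackets (z : ℝ) :
    ∀ p : ℝ × ℝ, p.1 ≠ p.2 →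
      (p.1 - p.2) ^ 2 * pb h2R1 (h2R2 z) p = -(sinhc (2 * z * h2R1 p) * h2R1 p) ∧
      (p.1 - p.2) ^ 2 * pb h2R1 (h2R3 z) p = -(2 * h2R2 z p) ∧
      (p.1 - p.2) ^ 2 * pb (h2R2 z) (h2R3 z) p
        = -(Real.cosh (2 * z * h2R1 p) * h2R3 z p) := by
  intro p hp
  have hs : p.1 - p.2 ≠ 0 := sub_ne_zero.2 hp
  have hd : HasFDerivAt (fun q : ℝ×ℝ => q.1 - q.2)
      (ContinuousLinearMap.fst ℝ ℝ ℝ - ContinuousLinearMap.snd ℝ ℝ ℝ) p :=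
    hasFDerivAt_fst.sub hasFDerivAt_snd
  have hw : HasFDerivAt (fun q : ℝ×ℝ => q.1 + q.2)
      (ContinuousLinearMap.fst ℝ ℝ ℝ + ContinuousLinearMap.snd ℝ ℝ ℝ) p :=
    hasFDerivAt_fst.add hasFDerivAt_snd
  have hinv := (hasDerivAt_inv hs).comp_hasFDerivAt p hd
  simp only [Function.comp_def] at hinv
  have e1 : h2R1 = fun x : ℝ×ℝ => (x.1 - x.2)⁻¹ := by
    funext q; simp [h2R1]
  have hopen : IsOpen {q : ℝ × ℝ | q.1 ≠ q.2} := isOpen_ne_fun continuous_fst continuous_snd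
  by_cases hz : z = 0
  · -- undeformed case
    subst hz
    have heq2 : h2R2 0 = fun y : ℝ×ℝ => 2⁻¹ * ((y.1 + y.2) * (y.1 - y.2)⁻¹) := by
      funext q
      simp [h2R2, sinhc]
      ring
    have heq3 : h2R3 0 =ᶠ[nhds p]
        (fun y : ℝ×ℝ => ((y.1 + y.2) * (y.1 + y.2) - (y.1 - y.2) * (y.1 - y.2))
          * (4 * (y.1 - y.2))⁻¹) := by
      filter_upwards [hopen.mem_nhds hp] with q hq
      have hq' : q.1 - q.2 ≠ 0 := sub_ne_zero.2 hq
      simp only [h2R3, sinhc]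
      norm_num
      field_simp
    have H2 := (hw.mul hinv).const_mul (2:ℝ)⁻¹
    simp only [Pi.mul_def] at H2
    have h4s : (4:ℝ) * (p.1 - p.2) ≠ 0 := mul_ne_zero four_ne_zero hs
    have hinv4 := (hasDerivAt_inv h4s).comp_hasFDerivAt p (hd.const_mul 4)
    simp only [Function.comp_def] at hinv4
    have H3 := ((hw.mul hw).sub (hd.mul hd)).mul hinv4
    simp only [Pi.mul_def, Pi.sub_def] at H3
    have hv2 : h2R2 0 p = 2⁻¹ * ((p.1 + p.2) * (p.1 - p.2)⁻¹) := by rw [heq2]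
    have hv3 : h2R3 0 p = ((p.1 + p.2) * (p.1 + p.2) - (p.1 - p.2) * (p.1 - p.2))
        * (4 * (p.1 - p.2))⁻¹ := heq3.self_of_nhds
    have hS : sinhc (2 * 0 * h2R1 p) = 1 := by norm_num [sinhc]
    refine ⟨?_, ?_, ?_⟩
    · rw [pb, hS, e1, heq2, hinv.fderiv, H2.fderiv]
      simp only [ContinuousLinearMap.coe_smul', Pi.smul_apply, ContinuousLinearMap.add_apply,
        ContinuousLinearMap.coe_sub', Pi.sub_apply, ContinuousLinearMap.coe_fst',
        ContinuousLinearMap.coe_snd', smul_eq_mul, ContinuousLinearMap.neg_apply,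
        ContinuousLinearMap.sub_apply, ContinuousLinearMap.smul_apply]
      field_simp
      ring
    · rw [pb, hv2, e1, heq3.fderiv_eq, hinv.fderiv, H3.fderiv]
      simp only [ContinuousLinearMap.coe_smul', Pi.smul_apply, ContinuousLinearMap.add_apply,
        ContinuousLinearMap.coe_sub', Pi.sub_apply, ContinuousLinearMap.coe_fst',
        ContinuousLinearMap.coe_snd', smul_eq_mul, ContinuousLinearMap.neg_apply,
        ContinuousLinearMap.sub_apply, ContinuousLinearMap.smul_apply]
      field_simp
      ring
    · rw [pb, hv3, e1, heq2, heq3.fderiv_eq, H2.fderiv, H3.fderiv]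
      simp only [ContinuousLinearMap.coe_smul', Pi.smul_apply, ContinuousLinearMap.add_apply,
        ContinuousLinearMap.coe_sub', Pi.sub_apply, ContinuousLinearMap.coe_fst',
        ContinuousLinearMap.coe_snd', smul_eq_mul, ContinuousLinearMap.neg_apply,
        ContinuousLinearMap.sub_apply, ContinuousLinearMap.smul_apply]
      field_simp
      simp only [mul_zero, zero_div, Real.cosh_zero]
      ring
  · -- deformed case
    have hθ0 : 2 * z * (p.1 - p.2)⁻¹ ≠ 0 :=
      mul_ne_zero (mul_ne_zero two_ne_zero hz) (inv_ne_zero hs)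
    have hSn : Real.sinh (2 * z * (p.1 - p.2)⁻¹) ≠ 0 := by
      simpa [Real.sinh_eq_zero] using hθ0
    have hθ := hinv.const_mul (2*z)
    have hsinh := (Real.hasDerivAt_sinh ((2*z) * (p.1-p.2)⁻¹)).comp_hasFDerivAt p hθ
    simp only [Function.comp_def] at hsinh
    have H2 := (hw.mul hsinh).mul_const ((4*z)⁻¹)
    simp only [Pi.mul_def] at H2
    have H3a := ((hw.mul hw).mul hsinh).mul_const ((8*z)⁻¹)
    simp only [Pi.mul_def] at H3a
    have h2Sn : (2:ℝ) * Real.sinh (2 * z * (p.1 - p.2)⁻¹) ≠ 0 := mul_ne_zero two_ne_zero hSn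
    have hinvS := (hasDerivAt_inv h2Sn).comp_hasFDerivAt p (hsinh.const_mul 2)
    simp only [Function.comp_def] at hinvS
    have H3 := H3a.sub (hinvS.const_mul z)
    simp only [Pi.sub_def] at H3
    have heq2 : h2R2 z =ᶠ[nhds p]
        (fun y : ℝ×ℝ => (y.1 + y.2) * Real.sinh (2 * z * (y.1 - y.2)⁻¹) * (4 * z)⁻¹) := by
      filter_upwards [hopen.mem_nhds hp] with q hq
      have hq' : q.1 - q.2 ≠ 0 := sub_ne_zero.2 hq
      have ha : 2 * z / (q.1 - q.2) ≠ 0 := div_ne_zero (mul_ne_zero two_ne_zero hz) hq'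
      simp only [h2R2, sinhc, if_neg ha]
      simp only [div_eq_mul_inv]
      field_simp
      ring
    have heq3 : h2R3 z =ᶠ[nhds p]
        (fun y : ℝ×ℝ => (y.1 + y.2) * (y.1 + y.2) * Real.sinh (2 * z * (y.1 - y.2)⁻¹) * (8 * z)⁻¹
          - z * (2 * Real.sinh (2 * z * (y.1 - y.2)⁻¹))⁻¹) := by
      filter_upwards [hopen.mem_nhds hp] with q hq
      have hq' : q.1 - q.2 ≠ 0 := sub_ne_zero.2 hq
      have ha : 2 * z / (q.1 - q.2) ≠ 0 := div_ne_zero (mul_ne_zero two_ne_zero hz) hq'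
      have hSq : Real.sinh (2 * z / (q.1 - q.2)) ≠ 0 := by
        simpa [Real.sinh_eq_zero] using ha
      simp only [h2R3, sinhc, if_neg ha]
      simp only [div_eq_mul_inv]
      rw [div_eq_mul_inv] at hSq
      field_simp
      ring
    have hv2 : h2R2 z p
        = (p.1 + p.2) * Real.sinh (2 * z * (p.1 - p.2)⁻¹) * (4 * z)⁻¹ := heq2.self_of_nhds
    have hv3 : h2R3 z p
        = (p.1 + p.2) * (p.1 + p.2) * Real.sinh (2 * z * (p.1 - p.2)⁻¹) * (8 * z)⁻¹
          - z * (2 * Real.sinh (2 * z * (p.1 - p.2)⁻¹))⁻¹ := heq3.self_of_nhds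
    have hS : sinhc (2 * z * h2R1 p)
        = Real.sinh (2 * z * (p.1 - p.2)⁻¹) * (p.1 - p.2) / (2 * z) := by
      rw [e1]
      simp only [sinhc, if_neg hθ0]
      rw [div_eq_div_iff hθ0 (mul_ne_zero two_ne_zero hz)]
      field_simp
    have hC : Real.cosh (2 * z * h2R1 p) = Real.cosh (2 * z * (p.1 - p.2)⁻¹) := by
      rw [e1]
    refine ⟨?_, ?_, ?_⟩
    · rw [pb, hS, e1, heq2.fderiv_eq, hinv.fderiv, H2.fderiv]
      simp only [ContinuousLinearMap.coe_smul', Pi.smul_apply, ContinuousLinearMap.add_apply,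
        ContinuousLinearMap.coe_sub', Pi.sub_apply, ContinuousLinearMap.coe_fst',
        ContinuousLinearMap.coe_snd', smul_eq_mul, ContinuousLinearMap.neg_apply,
        ContinuousLinearMap.sub_apply, ContinuousLinearMap.smul_apply]
      field_simp
      ring
    · rw [pb, hv2, e1, heq3.fderiv_eq, hinv.fderiv, H3.fderiv]
      simp only [ContinuousLinearMap.coe_smul', Pi.smul_apply, ContinuousLinearMap.add_apply,
        ContinuousLinearMap.coe_sub', Pi.sub_apply, ContinuousLinearMap.coe_fst',
        ContinuousLinearMap.coe_snd', smul_eq_mul, ContinuousLinearMap.neg_apply,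
        ContinuousLinearMap.sub_apply, ContinuousLinearMap.smul_apply]
      field_simp
      ring
    · rw [pb, hC, hv3, heq2.fderiv_eq, heq3.fderiv_eq, H2.fderiv, H3.fderiv]
      simp only [ContinuousLinearMap.coe_smul', Pi.smul_apply, ContinuousLinearMap.add_apply,
        ContinuousLinearMap.coe_sub', Pi.sub_apply, ContinuousLinearMap.coe_fst',
        ContinuousLinearMap.coe_snd', smul_eq_mul, ContinuousLinearMap.neg_apply,
        ContinuousLinearMap.sub_apply, ContinuousLinearMap.smul_apply]
      field_simp
      ring
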